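/- Let A be a type, Q a list of booleans (a quantifier prefix), and F₀, F₁ functions from A-tuples of length |Q| to 𝟛 that take only well-defined values. If IterQ(Q, fun v ↦ (U ∧ F₀ v) ∨ F₁ v) is well-defined, then IterQ(Q, fun v ↦ (U ∧ F₀ v) ∨ F₁ v) = IterQ(Q, F₁). -/

import Mathlib

/-- Kleene's strong three-valued logic: the three-element chain F < U < T. -/
inductive K3 : Type
  | F | U | T
deriving DecidableEq

instance : Fintype K3 := ⟨{K3.F, K3.U, K3.T}, fun x => by cases x <;> decide⟩

namespace K3

/-- Rank of a truth value in the chain F < U < T. -/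
def toFin : K3 → Fin 3
  | F => 0
  | U => 1
  | T => 2

instance : LinearOrder K3 := LinearOrder.lift' toFin (by decide)

/-- Kleene negation: swaps T and F, fixes U. -/
def neg : K3 → K3
  | F => T
  | U => U
  | T => F

/-- A truth value is well-defined if it is F or T. -/
def WellDefined (v : K3) : Prop := v = F ∨ v = T

end K3


instance : BoundedOrder K3 where
  top := K3.T
  bot := K3.F
  le_top x := by cases x <;> decide
  bot_le x := by cases x <;> decide

noncomputable instance : CompleteLinearOrder K3 :=
  Fintype.toCompleteLinearOrder K3

/-- Iterated quantification over a quantifier prefix `Q` (a list of booleans,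
`true` = existential = supremum, `false` = universal = infimum) of a 𝟛-valued
function on tuples of length `Q.length`. -/
noncomputable def IterQ {A : Type*} : (Q : List Bool) → ((Fin Q.length → A) → K3) → K3
  | [], G => G (fun i => i.elim0)
  | true :: Q', G => ⨆ a : A, IterQ Q' (fun v => G (Fin.cons a v))
  | false :: Q', G => ⨅ a : A, IterQ Q' (fun v => G (Fin.cons a v))

/-
Pointwise `F₁ v ≤ (U ⊓ F₀ v) ⊔ F₁ v ≤ U ⊔ F₁ v`. Quantification is monotone and
`U ⊔ ·` can be pulled out of it up to `≤` (sup distributes over infima in a complete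
linear order), so `IterQ Q F₁ ≤ IterQ Q G ≤ U ⊔ IterQ Q F₁` for `G` the left-hand side.
Both ends are well-defined, and between a well-defined `y` and `U ⊔ y` the only
well-defined value is `y` itself.
-/

namespace K3

instance : DecidablePred WellDefined := fun v => inferInstanceAs (Decidable (v = F ∨ v = T))

lemma wellDefined_iff_ne_U {v : K3} : WellDefined v ↔ v ≠ U := by
  cases v <;> decide

lemma eq_F_of_le_U {v : K3} (hv : WellDefined v) (h : v ≤ U) : v = F := by
  revert hv h; cases v <;> decide

lemma eq_T_of_U_le {v : K3} (hv : WellDefined v) (h : U ≤ v) : v = T := by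
  revert hv h; cases v <;> decide

lemma eq_of_le_of_le_U_sup {x y : K3} (hx : WellDefined x) (hy : WellDefined y)
    (hyx : y ≤ x) (hxy : x ≤ U ⊔ y) : x = y := by
  revert hx hy hyx hxy; cases x <;> cases y <;> decide

lemma wellDefined_iSup {ι : Sort*} {f : ι → K3} (h : ∀ i, WellDefined (f i)) :
    WellDefined (⨆ i, f i) := by
  refine wellDefined_iff_ne_U.2 fun hU => absurd (hU ▸ ?_ : U ≤ F) (by decide)
  exact iSup_le fun i => (eq_F_of_le_U (h i) (hU ▸ le_iSup f i)).le

lemma wellDefined_iInf {ι : Sort*} {f : ι → K3} (h : ∀ i, WellDefined (f i)) :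
    WellDefined (⨅ i, f i) := by
  refine wellDefined_iff_ne_U.2 fun hU => absurd (hU ▸ ?_ : T ≤ U) (by decide)
  exact le_iInf fun i => (eq_T_of_U_le (h i) (hU ▸ iInf_le f i)).ge

end K3

section IterQ

variable {A : Type*}

lemma IterQ_mono : ∀ {Q : List Bool} {F G : (Fin Q.length → A) → K3},
    (∀ v, F v ≤ G v) → IterQ Q F ≤ IterQ Q G
  | [], _, _, h => h _
  | true :: _, _, _, h => iSup_mono fun _ => IterQ_mono fun _ => h _
  | false :: _, _, _, h => iInf_mono fun _ => IterQ_mono fun _ => h _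

lemma IterQ_wellDefined : ∀ {Q : List Bool} {F : (Fin Q.length → A) → K3},
    (∀ v, K3.WellDefined (F v)) → K3.WellDefined (IterQ Q F)
  | [], _, h => h _
  | true :: _, _, h => K3.wellDefined_iSup fun _ => IterQ_wellDefined fun _ => h _
  | false :: _, _, h => K3.wellDefined_iInf fun _ => IterQ_wellDefined fun _ => h _

/-- Only `≤`: for empty `A` an existential quantifier gives `⊥` while `c ⊔ ⊥ = c`. -/
lemma IterQ_sup_le (c : K3) : ∀ {Q : List Bool} {F : (Fin Q.length → A) → K3},
    IterQ Q (fun v => c ⊔ F v) ≤ c ⊔ IterQ Q F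
  | [], _ => le_rfl
  | true :: _, _ => (iSup_mono fun _ => IterQ_sup_le c).trans
      (iSup_sup_eq.le.trans (sup_le_sup_right iSup_const_le _))
  | false :: _, _ => (iInf_mono fun _ => IterQ_sup_le c).trans_eq (sup_iInf_eq _ _).symm

end IterQ

theorem kleene_quant_undef_elim_general {A : Type*} (Q : List Bool)
    (F₀ F₁ : (Fin Q.length → A) → K3)
    (h₁ : ∀ v, K3.WellDefined (F₁ v))
    (hwd : K3.WellDefined (IterQ Q (fun v => (K3.U ⊓ F₀ v) ⊔ F₁ v))) :
    IterQ Q (fun v => (K3.U ⊓ F₀ v) ⊔ F₁ v) = IterQ Q F₁ := by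
  have lower : IterQ Q F₁ ≤ IterQ Q (fun v => (K3.U ⊓ F₀ v) ⊔ F₁ v) :=
    IterQ_mono fun _ => le_sup_right
  have upper : IterQ Q (fun v => (K3.U ⊓ F₀ v) ⊔ F₁ v) ≤ K3.U ⊔ IterQ Q F₁ :=
    (IterQ_mono fun _ => sup_le_sup_right inf_le_left _).trans (IterQ_sup_le K3.U)
  exact K3.eq_of_le_of_le_U_sup hwd (IterQ_wellDefined h₁) lower upper

/-- If `F₀` and `F₁` take only well-defined values and
`IterQ Q (fun v => (U ∧ F₀ v) ∨ F₁ v)` is well-defined, then it equals `IterQ Q F₁`. -/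
theorem kleene_quant_undef_elim {A : Type*} (Q : List Bool)
    (F₀ F₁ : (Fin Q.length → A) → K3)
    (h₀ : ∀ v, K3.WellDefined (F₀ v)) (h₁ : ∀ v, K3.WellDefined (F₁ v))
    (hwd : K3.WellDefined (IterQ Q (fun v => (K3.U ⊓ F₀ v) ⊔ F₁ v))) :
    IterQ Q (fun v => (K3.U ⊓ F₀ v) ⊔ F₁ v) = IterQ Q F₁ :=
  kleene_quant_undef_elim_general Q F₀ F₁ h₁ hwd
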